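/- arXiv:1710.00968 — 6 statements merged into one kernel-verified Lean document; each statement's English description precedes it below -/
import Mathlib

section
/- The function h satisfies h(0) = 0 and h(x) > 0 for every x ∈ (0, b]; consequently h is strictly increasing on [0, b]: for all 0 ≤ x < y ≤ b one has h(x) < h(y). -/
/-- The effective holding cost `h` of (3.19a) of the paper vanishes only at `0`,
is positive on `(0, b]`, and is strictly increasing on `[0, b]`. -/
theorem effective_holding_cost_strictMono
    (I : ℕ) (hI : 1 ≤ I)
    (hcost μ bcap : Fin I → ℝ)
    (hhpos : ∀ i, 0 < hcost i) (hμpos : ∀ i, 0 < μ i) (hbpos : ∀ i, 0 < bcap i)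
    (b : ℝ) (hb : b = ∑ i, bcap i / μ i)
    (h : ℝ → ℝ)
    (hdef : ∀ x : ℝ, h x = sInf {y : ℝ | ∃ ξ : Fin I → ℝ,
      (∀ i, ξ i ∈ Set.Icc 0 (bcap i)) ∧ (∑ i, ξ i / μ i) = x ∧
      y = ∑ i, hcost i * ξ i}) :
    h 0 = 0 ∧
    (∀ x : ℝ, 0 < x → x ≤ b → 0 < h x) ∧
    (∀ x y : ℝ, 0 ≤ x → x < y → y ≤ b → h x < h y) := by
  haveI hFin : Nonempty (Fin I) := ⟨⟨0, hI⟩⟩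
  set S : ℝ → Set ℝ := fun x => {y : ℝ | ∃ ξ : Fin I → ℝ,
      (∀ i, ξ i ∈ Set.Icc 0 (bcap i)) ∧ (∑ i, ξ i / μ i) = x ∧
      y = ∑ i, hcost i * ξ i} with hS
  have hbpos' : 0 < b := by
    rw [hb]
    exact Finset.sum_pos (fun i _ => div_pos (hbpos i) (hμpos i)) Finset.univ_nonempty
  obtain ⟨i0, -, hc⟩ := Finset.exists_min_image Finset.univ
    (fun i => hcost i * μ i) Finset.univ_nonempty
  set c := hcost i0 * μ i0 with hcdef
  have hcpos : 0 < c := mul_pos (hhpos i0) (hμpos i0)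
  -- every element of S x is ≥ 0
  have nonneg : ∀ x : ℝ, ∀ y ∈ S x, 0 ≤ y := by
    rintro x y ⟨ξ, hξ, -, rfl⟩
    exact Finset.sum_nonneg fun i _ => mul_nonneg (hhpos i).le (hξ i).1
  have bdd : ∀ x : ℝ, BddBelow (S x) := fun x => ⟨0, fun y hy => nonneg x y hy⟩
  -- lower bound c * x
  have lb : ∀ x : ℝ, ∀ y ∈ S x, c * x ≤ y := by
    rintro x y ⟨ξ, hξ, hsum, rfl⟩
    calc c * x = ∑ i, c * (ξ i / μ i) := by rw [← hsum, Finset.mul_sum]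
    _ ≤ ∑ i, hcost i * ξ i := by
        refine Finset.sum_le_sum fun i _ => ?_
        have h1 : ξ i / μ i * μ i = ξ i := div_mul_cancel₀ _ (ne_of_gt (hμpos i))
        have h2 : c ≤ hcost i * μ i := hc i (Finset.mem_univ i)
        have h3 : 0 ≤ ξ i / μ i := div_nonneg (hξ i).1 (hμpos i).le
        have h4 : hcost i * μ i * (ξ i / μ i) = hcost i * ξ i := by
          rw [mul_assoc, mul_comm (μ i), h1]
        nlinarith [mul_nonneg (sub_nonneg.mpr h2) h3, h4]
  -- nonemptiness of S x for x ∈ [0, b]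
  have mem_scale : ∀ x : ℝ, 0 ≤ x → x ≤ b →
      ((x / b) * ∑ i, hcost i * bcap i) ∈ S x := by
    intro x hx0 hxb
    refine ⟨fun i => (x / b) * bcap i, fun i => ?_, ?_, ?_⟩
    · have hle : x / b ≤ 1 := div_le_one_of_le₀ hxb hbpos'.le
      constructor
      · exact mul_nonneg (div_nonneg hx0 hbpos'.le) (hbpos i).le
      · nlinarith [mul_nonneg (sub_nonneg.mpr hle) (hbpos i).le]
    · have : ∀ i : Fin I, (x / b) * bcap i / μ i = (x / b) * (bcap i / μ i) := fun i =>
        mul_div_assoc _ _ _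
      rw [Finset.sum_congr rfl fun i _ => this i, ← Finset.mul_sum, ← hb,
        div_mul_cancel₀ _ (ne_of_gt hbpos')]
    · rw [Finset.mul_sum]
      exact Finset.sum_congr rfl fun i _ => by ring
  have hne : ∀ x : ℝ, 0 ≤ x → x ≤ b → (S x).Nonempty :=
    fun x hx0 hxb => ⟨_, mem_scale x hx0 hxb⟩
  -- h 0 = 0
  have h0 : h 0 = 0 := by
    rw [hdef]
    refine le_antisymm ?_ (le_csInf ⟨_, mem_scale 0 le_rfl hbpos'.le⟩ (nonneg 0))
    have : (0 : ℝ) ∈ S 0 := by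
      refine ⟨fun _ => 0, fun i => ⟨le_rfl, (hbpos i).le⟩, by simp, by simp⟩
    exact csInf_le (bdd 0) this
  have hpos : ∀ x : ℝ, 0 < x → x ≤ b → 0 < h x := by
    intro x hx0 hxb
    have : c * x ≤ h x := by
      rw [hdef]; exact le_csInf (hne x hx0.le hxb) (lb x)
    nlinarith
  refine ⟨h0, hpos, ?_⟩
  intro x y hx0 hxy hyb
  rcases eq_or_lt_of_le hx0 with heq | hx0'
  · rw [← heq, h0]; exact hpos y (heq ▸ hxy) hyb
  · have hy0 : 0 < y := lt_trans hx0' hxy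
    set s := x / y with hsdef
    have hs0 : 0 < s := div_pos hx0' hy0
    have hs1 : s < 1 := (div_lt_one hy0).mpr hxy
    -- h x ≤ s * C for any C ∈ S y
    have key : ∀ C ∈ S y, h x ≤ s * C := by
      rintro C ⟨ξ, hξ, hsum, rfl⟩
      have mem : s * ∑ i, hcost i * ξ i ∈ S x := by
        refine ⟨fun i => s * ξ i, fun i => ?_, ?_, ?_⟩
        · constructor
          · exact mul_nonneg hs0.le (hξ i).1
          · show s * ξ i ≤ bcap i
            nlinarith [mul_nonneg (sub_nonneg.mpr hs1.le) (hξ i).1, (hξ i).2]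
        · have : ∀ i : Fin I, s * ξ i / μ i = s * (ξ i / μ i) := fun i => mul_div_assoc _ _ _
          rw [Finset.sum_congr rfl fun i _ => this i, ← Finset.mul_sum, hsum, hsdef,
            div_mul_cancel₀ _ (ne_of_gt hy0)]
        · rw [Finset.mul_sum]
          exact Finset.sum_congr rfl fun i _ => by ring
      rw [hdef]; exact csInf_le (bdd x) mem
    have hxly : h x ≤ s * h y := by
      have : h x / s ≤ h y := by
        rw [hdef y]
        refine le_csInf (hne y hy0.le hyb) fun C hC => ?_
        rw [div_le_iff₀ hs0]
        calc h x ≤ s * C := key C hC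
        _ = C * s := mul_comm _ _
      calc h x = (h x / s) * s := by field_simp
      _ ≤ h y * s := by nlinarith
      _ = s * h y := mul_comm _ _
    have hhy : 0 < h y := hpos y hy0 hyb
    nlinarith
end

section
/- The function h is Lipschitz continuous on [0, b] with Lipschitz constant maxᵢ ĥᵢ μᵢ: for all x, y ∈ [0, b], |h(x) − h(y)| ≤ (maxᵢ ĥᵢ μᵢ) · |x − y|. -/
/-!
An admissible allocation `ξ` for a load `x` can be moved to one for any other load `y` along
a monotone path: towards `0` when `y ≤ x`, which does not increase the cost, and towards the
full allocation `bcap` when `x ≤ y`, which raises the cost of class `i` by `ĥᵢ μᵢ` per unit of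
load, hence by at most `(maxᵢ ĥᵢ μᵢ) (y - x)`. The intermediate value theorem on the segment
supplies the allocation with load exactly `y`. Taking infima gives
`h y ≤ h x + (maxᵢ ĥᵢ μᵢ) |x - y|`, and the bound is symmetric.
-/

open Finset Set

theorem Continuous.Icc_subset_image_Icc {E : Type*} [TopologicalSpace E] [AddCommGroup E]
    [PartialOrder E] [IsOrderedAddMonoid E] [Module ℝ E] [PosSMulMono ℝ E]
    [ContinuousAdd E] [ContinuousSMul ℝ E] {f : E → ℝ} (hf : Continuous f) {a b : E}
    (hab : a ≤ b) : Icc (f a) (f b) ⊆ f '' Icc a b := by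
  refine ((convex_segment a b).isPreconnected.intermediate_value (left_mem_segment ℝ a b)
    (right_mem_segment ℝ a b) hf.continuousOn).trans ?_
  exact image_mono (segment_subset_Icc hab)

section HoldingCost

variable {ι : Type*} [Fintype ι] {hcost μ bcap : ι → ℝ} {K : ℝ}

def holdingCosts (hcost μ bcap : ι → ℝ) (x : ℝ) : Set ℝ :=
  {y | ∃ ξ : ι → ℝ, (∀ i, ξ i ∈ Icc 0 (bcap i)) ∧ (∑ i, ξ i / μ i) = x ∧
    y = ∑ i, hcost i * ξ i}

theorem sum_mul_sub_le_mul_sum_div_sub (hμ : ∀ i, 0 < μ i) (hK : ∀ i, hcost i * μ i ≤ K)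
    {ξ ζ : ι → ℝ} (hξζ : ξ ≤ ζ) :
    ∑ i, hcost i * ζ i - ∑ i, hcost i * ξ i ≤ K * (∑ i, ζ i / μ i - ∑ i, ξ i / μ i) := by
  simp only [← Finset.sum_sub_distrib, Finset.mul_sum]
  refine Finset.sum_le_sum fun i _ => ?_
  calc hcost i * ζ i - hcost i * ξ i = hcost i * μ i * ((ζ i - ξ i) / μ i) := by
        field_simp [(hμ i).ne']
    _ ≤ K * ((ζ i - ξ i) / μ i) :=
        mul_le_mul_of_nonneg_right (hK i) (div_nonneg (sub_nonneg.2 (hξζ i)) (hμ i).le)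
    _ = K * (ζ i / μ i - ξ i / μ i) := by rw [sub_div]

theorem exists_sum_div_eq_sum_mul_le (hμ : ∀ i, 0 < μ i) (hc : ∀ i, 0 ≤ hcost i)
    (hK : ∀ i, hcost i * μ i ≤ K) (hK0 : 0 ≤ K)
    {ξ : ι → ℝ} (hξ : ∀ i, ξ i ∈ Icc 0 (bcap i)) {y : ℝ}
    (hy : y ∈ Icc 0 (∑ i, bcap i / μ i)) :
    ∃ ζ : ι → ℝ, (∀ i, ζ i ∈ Icc 0 (bcap i)) ∧ ∑ i, ζ i / μ i = y ∧
      ∑ i, hcost i * ζ i ≤ ∑ i, hcost i * ξ i + K * |∑ i, ξ i / μ i - y| := by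
  have hload : Continuous fun ζ : ι → ℝ => ∑ i, ζ i / μ i := by fun_prop
  simp only [← mem_univ_pi, pi_univ_Icc] at hξ ⊢
  rcases le_total y (∑ i, ξ i / μ i) with hyξ | hξy
  · obtain ⟨ζ, ⟨hζ0, hζξ⟩, rfl⟩ :=
      hload.Icc_subset_image_Icc hξ.1 ⟨by simpa using hy.1, hyξ⟩
    refine ⟨ζ, ⟨hζ0, hζξ.trans hξ.2⟩, rfl, ?_⟩
    have hcost_le : ∑ i, hcost i * ζ i ≤ ∑ i, hcost i * ξ i :=
      Finset.sum_le_sum fun i _ => mul_le_mul_of_nonneg_left (hζξ i) (hc i)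
    linarith [mul_nonneg hK0 (abs_nonneg (∑ i, ξ i / μ i - ∑ i, ζ i / μ i))]
  · obtain ⟨ζ, ⟨hξζ, hζb⟩, rfl⟩ := hload.Icc_subset_image_Icc hξ.2 ⟨hξy, hy.2⟩
    refine ⟨ζ, ⟨hξ.1.trans hξζ, hζb⟩, rfl, ?_⟩
    have hcost_le := sum_mul_sub_le_mul_sum_div_sub hμ hK hξζ
    rw [abs_sub_comm, abs_of_nonneg (sub_nonneg.2 hξy)]
    linarith

theorem holdingCosts_nonempty (hbcap : ∀ i, 0 ≤ bcap i) {x : ℝ}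
    (hx : x ∈ Icc 0 (∑ i, bcap i / μ i)) : (holdingCosts hcost μ bcap x).Nonempty := by
  have hload : Continuous fun ζ : ι → ℝ => ∑ i, ζ i / μ i := by fun_prop
  obtain ⟨ζ, hζ, rfl⟩ := hload.Icc_subset_image_Icc hbcap ⟨by simpa using hx.1, hx.2⟩
  rw [← pi_univ_Icc, mem_univ_pi] at hζ
  exact ⟨_, ζ, hζ, rfl, rfl⟩

theorem bddBelow_holdingCosts (hc : ∀ i, 0 ≤ hcost i) (x : ℝ) :
    BddBelow (holdingCosts hcost μ bcap x) := by
  refine ⟨0, ?_⟩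
  rintro _ ⟨ξ, hξ, -, rfl⟩
  exact Finset.sum_nonneg fun i _ => mul_nonneg (hc i) (hξ i).1

theorem sInf_holdingCosts_le_add (hμ : ∀ i, 0 < μ i) (hc : ∀ i, 0 ≤ hcost i)
    (hK : ∀ i, hcost i * μ i ≤ K) (hK0 : 0 ≤ K) (hbcap : ∀ i, 0 ≤ bcap i) {x y : ℝ}
    (hx : x ∈ Icc 0 (∑ i, bcap i / μ i)) (hy : y ∈ Icc 0 (∑ i, bcap i / μ i)) :
    sInf (holdingCosts hcost μ bcap y) ≤ sInf (holdingCosts hcost μ bcap x) + K * |x - y| := by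
  rw [← sub_le_iff_le_add]
  refine le_csInf (holdingCosts_nonempty hbcap hx) ?_
  rintro _ ⟨ξ, hξ, rfl, rfl⟩
  obtain ⟨ζ, hζ, hload, hcost_le⟩ := exists_sum_div_eq_sum_mul_le hμ hc hK hK0 hξ hy
  rw [sub_le_iff_le_add]
  exact (csInf_le (bddBelow_holdingCosts hc y) ⟨ζ, hζ, hload, rfl⟩).trans hcost_le

end HoldingCost

/-- Lipschitz continuity of the effective holding cost `h` of (3.19a) of the
paper on `[0, b]`, with Lipschitz constant `maxᵢ ĥᵢ μᵢ`. -/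
theorem effective_holding_cost_lipschitz
    (I : ℕ) (hI : 1 ≤ I)
    (hcost μ bcap : Fin I → ℝ)
    (hhpos : ∀ i, 0 < hcost i) (hμpos : ∀ i, 0 < μ i) (hbpos : ∀ i, 0 < bcap i)
    (b : ℝ) (hb : b = ∑ i, bcap i / μ i)
    (h : ℝ → ℝ)
    (hdef : ∀ x : ℝ, h x = sInf {y : ℝ | ∃ ξ : Fin I → ℝ,
      (∀ i, ξ i ∈ Set.Icc 0 (bcap i)) ∧ (∑ i, ξ i / μ i) = x ∧
      y = ∑ i, hcost i * ξ i}) :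
    ∀ x ∈ Set.Icc (0:ℝ) b, ∀ y ∈ Set.Icc (0:ℝ) b,
      |h x - h y| ≤
        (Finset.univ.sup'
          (Finset.univ_nonempty_iff.mpr (Fin.pos_iff_nonempty.mp hI))
          (fun i => hcost i * μ i)) * |x - y| := by
  intro x hx y hy
  set K := Finset.univ.sup' _ fun i => hcost i * μ i
  have hK (i : Fin I) : hcost i * μ i ≤ K := Finset.le_sup' (fun j => hcost j * μ j) (mem_univ i)
  have hK0 : 0 ≤ K := (mul_pos (hhpos ⟨0, hI⟩) (hμpos ⟨0, hI⟩)).le.trans (hK _)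
  have hc (i : Fin I) : 0 ≤ hcost i := (hhpos i).le
  have hbcap (i : Fin I) : 0 ≤ bcap i := (hbpos i).le
  subst hb
  rw [hdef, hdef, abs_sub_le_iff, sub_le_iff_le_add', sub_le_iff_le_add']
  exact ⟨abs_sub_comm x y ▸ sInf_holdingCosts_le_add hμpos hc hK hK0 hbcap hy hx,
    sInf_holdingCosts_le_add hμpos hc hK hK0 hbcap hx hy⟩
end

section
/- Assume the ordering ĥ₁μ₁ ≥ ĥ₂μ₂ ≥ … ≥ ĥ_I μ_I. Let j ∈ {1, …, I} and υ ∈ [0, b̂_j], and set x = Σ_{i=j+1}^I b̂ᵢ/μᵢ + υ/μ_j. Then h(x) = Σ_{i=j+1}^I ĥᵢ b̂ᵢ + ĥ_j υ; that is, the 'greedy' vector ξ given by ξᵢ = b̂ᵢ for i > j, ξ_j = υ, and ξᵢ = 0 for i < j is a minimizer in the definition of h(x). -/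
/-- The greedy vector along the minimizing curve of Section 4.1 of the paper
attains the minimum defining the effective holding cost `h`, under the ordering
`ĥ₁μ₁ ≥ ĥ₂μ₂ ≥ … ≥ ĥ_I μ_I`. -/
theorem minimizing_curve_attains_holding_cost
    (I : ℕ) (hI : 1 ≤ I)
    (hcost μ bcap : Fin I → ℝ)
    (hhpos : ∀ i, 0 < hcost i) (hμpos : ∀ i, 0 < μ i) (hbpos : ∀ i, 0 < bcap i)
    (hord : ∀ i j : Fin I, i ≤ j → hcost j * μ j ≤ hcost i * μ i)
    (h : ℝ → ℝ)
    (hdef : ∀ x : ℝ, h x = sInf {y : ℝ | ∃ ξ : Fin I → ℝ,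
      (∀ i, ξ i ∈ Set.Icc 0 (bcap i)) ∧ (∑ i, ξ i / μ i) = x ∧
      y = ∑ i, hcost i * ξ i})
    (j : Fin I) (υ : ℝ) (hυ : υ ∈ Set.Icc 0 (bcap j)) :
    h ((∑ i ∈ Finset.Ioi j, bcap i / μ i) + υ / μ j) =
      (∑ i ∈ Finset.Ioi j, hcost i * bcap i) + hcost j * υ := by
  have hμne : ∀ i : Fin I, (μ i) ≠ 0 := fun i => (hμpos i).ne'
  set ξ₀ : Fin I → ℝ := fun i => if j < i then bcap i else if i = j then υ else 0 with hξ₀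
  -- generic sum computation for greedy-type vectors
  have hsum : ∀ (f : Fin I → ℝ) (v : ℝ),
      (∑ i, (if j < i then f i else if i = j then v else 0))
        = (∑ i ∈ Finset.Ioi j, f i) + v := by
    intro f v
    rw [Finset.sum_ite]
    have h1 : Finset.univ.filter (fun i : Fin I => j < i) = Finset.Ioi j := by
      ext i; simp
    have h2 : (∑ i ∈ Finset.univ.filter (fun i : Fin I => ¬ j < i),
        (if i = j then v else 0)) = v := by
      rw [Finset.sum_ite_eq' _ j (fun _ => v)]
      simp
    rw [h1, h2]
  have hmem0 : ∀ i, ξ₀ i ∈ Set.Icc 0 (bcap i) := by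
    intro i
    simp only [hξ₀]
    split_ifs with h1 h2
    · exact ⟨(hbpos i).le, le_rfl⟩
    · subst h2; exact hυ
    · exact ⟨le_rfl, (hbpos i).le⟩
  have hsum0 : (∑ i, ξ₀ i / μ i) = (∑ i ∈ Finset.Ioi j, bcap i / μ i) + υ / μ j := by
    have : ∀ i : Fin I, ξ₀ i / μ i
        = (if j < i then bcap i / μ i else if i = j then υ / μ j else 0) := by
      intro i
      simp only [hξ₀]
      split_ifs with h1 h2
      · rfl
      · subst h2; rfl
      · simp
    rw [Finset.sum_congr rfl (fun i _ => this i), hsum]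
  have hcost0 : (∑ i, hcost i * ξ₀ i)
      = (∑ i ∈ Finset.Ioi j, hcost i * bcap i) + hcost j * υ := by
    have : ∀ i : Fin I, hcost i * ξ₀ i
        = (if j < i then hcost i * bcap i else if i = j then hcost j * υ else 0) := by
      intro i
      simp only [hξ₀]
      split_ifs with h1 h2
      · rfl
      · subst h2; rfl
      · simp
    rw [Finset.sum_congr rfl (fun i _ => this i), hsum]
  set T : ℝ := (∑ i ∈ Finset.Ioi j, hcost i * bcap i) + hcost j * υ with hT
  set S : Set ℝ := {y : ℝ | ∃ ξ : Fin I → ℝ,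
      (∀ i, ξ i ∈ Set.Icc 0 (bcap i)) ∧
      (∑ i, ξ i / μ i) = (∑ i ∈ Finset.Ioi j, bcap i / μ i) + υ / μ j ∧
      y = ∑ i, hcost i * ξ i} with hS
  have hTmem : T ∈ S := ⟨ξ₀, hmem0, hsum0, hcost0.symm⟩
  have hlb : ∀ y ∈ S, T ≤ y := by
    rintro y ⟨ξ, hξmem, hξsum, rfl⟩
    -- exchange argument
    have key : ∀ i : Fin I,
        hcost j * μ j * (ξ i / μ i - ξ₀ i / μ i)
          ≤ hcost i * μ i * (ξ i / μ i - ξ₀ i / μ i) := by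
      intro i
      rcases lt_trichotomy i j with hij | hij | hij
      · have hg : ξ₀ i = 0 := by
          simp only [hξ₀]
          rw [if_neg (by exact fun hc => absurd (hc.trans hij) (lt_irrefl j)),
            if_neg (by exact fun hc => absurd hc hij.ne)]
        have hd : 0 ≤ ξ i / μ i - ξ₀ i / μ i := by
          rw [hg]
          simp [div_nonneg (hξmem i).1 (hμpos i).le]
        exact mul_le_mul_of_nonneg_right (hord i j hij.le) hd
      · rw [hij]
      · have hg : ξ₀ i = bcap i := by
          simp only [hξ₀]; rw [if_pos hij]
        have hd : ξ i / μ i - ξ₀ i / μ i ≤ 0 := by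
          rw [hg]
          have : ξ i / μ i ≤ bcap i / μ i :=
            (div_le_div_iff_of_pos_right (hμpos i)).mpr (hξmem i).2
          linarith
        exact mul_le_mul_of_nonpos_right (hord j i hij.le) hd
    have hsumkey : (0:ℝ) ≤ ∑ i, hcost i * μ i * (ξ i / μ i - ξ₀ i / μ i) := by
      calc (0:ℝ) = hcost j * μ j * (∑ i, (ξ i / μ i - ξ₀ i / μ i)) := by
            rw [Finset.sum_sub_distrib, hξsum, hsum0, sub_self, mul_zero]
        _ = ∑ i, hcost j * μ j * (ξ i / μ i - ξ₀ i / μ i) := by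
            rw [Finset.mul_sum]
        _ ≤ _ := Finset.sum_le_sum (fun i _ => key i)
    have hconv : ∀ (ζ : Fin I → ℝ) , ∀ i : Fin I,
        hcost i * μ i * (ζ i / μ i) = hcost i * ζ i := by
      intro ζ i
      rw [mul_assoc, mul_comm (μ i), div_mul_cancel₀ _ (hμne i)]
    have : (0:ℝ) ≤ (∑ i, hcost i * ξ i) - ∑ i, hcost i * ξ₀ i := by
      have := hsumkey
      simp only [mul_sub, hconv] at this
      rwa [Finset.sum_sub_distrib] at this
    rw [← hcost0, hT] at *
    linarith
  rw [hdef, hS.symm]  -- might need adjusting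
  exact le_antisymm (csInf_le ⟨T, hlb⟩ hTmem) (le_csInf ⟨T, hTmem⟩ hlb)
end

section
/- Let I ≥ 1 be an integer and for each i ∈ {1,…,I} let λᵢ, μᵢ, κ₁ᵢ, κ₂ᵢ > 0. Set ρᵢ = λᵢ/μᵢ, ε̂ᵢ = (κ₁ᵢ + κ₂ᵢ)/2, σ² = Σᵢ 2λᵢ/μᵢ² (with σ > 0 its square root), and ε = σ^{−2} Σᵢ (2λᵢ/μᵢ²) ε̂ᵢ. Then for all real numbers φ₁ᵢ, φ₂ᵢ (i ∈ {1,…,I}): Σᵢ [ φ₁ᵢ²/(2κ₁ᵢ) + ρᵢ φ₂ᵢ²/(2κ₂ᵢ) ] ≥ (1/(2ε)) · ( σ^{−1} Σᵢ (1/μᵢ)( √λᵢ · φ₁ᵢ − √μᵢ · ρᵢ · φ₂ᵢ ) )². -/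
/-!
Split each summand of the aggregated drift into its `φ₁ᵢ`-part `√λᵢ φ₁ᵢ / μᵢ` and its
`φ₂ᵢ`-part `-√μᵢ ρᵢ φ₂ᵢ / μᵢ`, and give them the weights `(λᵢ/μᵢ²) κ₁ᵢ` and `(λᵢ/μᵢ²) κ₂ᵢ`.
These `2I` weights sum to `σ² ε`, and each part squared over its weight is `φ₁ᵢ²/κ₁ᵢ`,
resp. `ρᵢ φ₂ᵢ²/κ₂ᵢ`. The inequality is therefore Sedrakyan's (Titu's) form of
Cauchy–Schwarz over the `2I` parts.
-/

open Finset

theorem Finset.sq_sum_add_div_le_sum_add_sq_div {ι R : Type*} [Semifield R] [LinearOrder R]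
    [IsStrictOrderedRing R] [ExistsAddOfLE R] (s : Finset ι) (x y : ι → R) {p q : ι → R}
    (hp : ∀ i ∈ s, 0 < p i) (hq : ∀ i ∈ s, 0 < q i) :
    (∑ i ∈ s, (x i + y i)) ^ 2 / ∑ i ∈ s, (p i + q i) ≤
      ∑ i ∈ s, (x i ^ 2 / p i + y i ^ 2 / q i) := by
  have h := sq_sum_div_le_sum_sq_div (s.disjSum s) (Sum.elim x y) (g := Sum.elim p q)
    (by rintro (i | i) hi <;> simp_all)
  simpa only [sum_disjSum, Sum.elim_inl, Sum.elim_inr, sum_add_distrib] using h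

theorem ambiguity_parameters_collapse_general
    (I : ℕ)
    (lam mu k1 k2 : Fin I → ℝ)
    (hlam : ∀ i, 0 < lam i) (hmu : ∀ i, 0 < mu i)
    (hk1 : ∀ i, 0 < k1 i) (hk2 : ∀ i, 0 < k2 i)
    (rho : Fin I → ℝ) (hrho : ∀ i, rho i = lam i / mu i)
    (ehat : Fin I → ℝ) (hehat : ∀ i, ehat i = (k1 i + k2 i) / 2)
    (σ2 : ℝ)
    (σ : ℝ) (hσpos : 0 < σ) (hσsq : σ ^ 2 = σ2)
    (ε : ℝ) (hε : ε = σ2⁻¹ * ∑ i, (2 * lam i / (mu i) ^ 2) * ehat i)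
    (φ1 φ2 : Fin I → ℝ) :
    (1 / (2 * ε)) *
        (σ⁻¹ * ∑ i, (1 / mu i) *
          (Real.sqrt (lam i) * φ1 i - Real.sqrt (mu i) * rho i * φ2 i)) ^ 2 ≤
      ∑ i, ((φ1 i) ^ 2 / (2 * k1 i) + rho i * (φ2 i) ^ 2 / (2 * k2 i)) := by
  set w : Fin I → ℝ := fun i => lam i / mu i ^ 2
  set x : Fin I → ℝ := fun i => Real.sqrt (lam i) * φ1 i / mu i
  set y : Fin I → ℝ := fun i => -(Real.sqrt (mu i) * rho i * φ2 i / mu i)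
  have hw : ∀ i, 0 < w i := fun i => div_pos (hlam i) (pow_pos (hmu i) 2)
  have titu := sq_sum_add_div_le_sum_add_sq_div univ x y
    (fun i _ => mul_pos (hw i) (hk1 i)) (fun i _ => mul_pos (hw i) (hk2 i))
  have hweights : ∑ i, (w i * k1 i + w i * k2 i) = σ2 * ε := by
    rw [hε, mul_inv_cancel_left₀ (hσsq ▸ pow_ne_zero 2 hσpos.ne')]
    exact sum_congr rfl fun i _ => by rw [hehat]; ring
  have hparts : ∀ i, x i ^ 2 / (w i * k1 i) + y i ^ 2 / (w i * k2 i) =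
      2 * ((φ1 i) ^ 2 / (2 * k1 i) + rho i * (φ2 i) ^ 2 / (2 * k2 i)) := by
    intro i
    have := hlam i; have := hmu i; have := hk1 i; have := hk2 i
    simp only [w, x, y, hrho, neg_sq, mul_pow, div_pow, Real.sq_sqrt (hlam i).le,
      Real.sq_sqrt (hmu i).le]
    field_simp
  have hdrift : ∑ i, (1 / mu i) *
      (Real.sqrt (lam i) * φ1 i - Real.sqrt (mu i) * rho i * φ2 i) = ∑ i, (x i + y i) :=
    sum_congr rfl fun i _ => by ring
  rw [hweights, sum_congr rfl fun i _ => hparts i, ← mul_sum] at titu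
  calc _ = (∑ i, (x i + y i)) ^ 2 / (σ2 * ε) / 2 := by rw [hdrift, ← hσsq]; ring
    _ ≤ _ := by linarith

/-- Collapse of the `2I` per-class ambiguity parameters into the single
parameter `ε` of the reduced game (Section 4.3.3 of the paper): the sum of the
per-class quadratic penalties dominates the quadratic penalty of the aggregated
drift perturbation. -/
theorem ambiguity_parameters_collapse
    (I : ℕ) (hI : 1 ≤ I)
    (lam mu k1 k2 : Fin I → ℝ)
    (hlam : ∀ i, 0 < lam i) (hmu : ∀ i, 0 < mu i)
    (hk1 : ∀ i, 0 < k1 i) (hk2 : ∀ i, 0 < k2 i)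
    (rho : Fin I → ℝ) (hrho : ∀ i, rho i = lam i / mu i)
    (ehat : Fin I → ℝ) (hehat : ∀ i, ehat i = (k1 i + k2 i) / 2)
    (σ2 : ℝ) (hσ2 : σ2 = ∑ i, 2 * lam i / (mu i) ^ 2)
    (σ : ℝ) (hσpos : 0 < σ) (hσsq : σ ^ 2 = σ2)
    (ε : ℝ) (hε : ε = σ2⁻¹ * ∑ i, (2 * lam i / (mu i) ^ 2) * ehat i)
    (φ1 φ2 : Fin I → ℝ) :
    (1 / (2 * ε)) *
        (σ⁻¹ * ∑ i, (1 / mu i) *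
          (Real.sqrt (lam i) * φ1 i - Real.sqrt (mu i) * rho i * φ2 i)) ^ 2 ≤
      ∑ i, ((φ1 i) ^ 2 / (2 * k1 i) + rho i * (φ2 i) ^ 2 / (2 * k2 i)) :=
  ambiguity_parameters_collapse_general I lam mu k1 k2 hlam hmu hk1 hk2 rho hrho ehat hehat σ2 σ
    hσpos hσsq ε hε φ1 φ2
end

section
/- For every β > 0 and every continuous function η : ℝ≥0 → ℝ with η(0) ∈ [0, β], there exists a solution (χ, ζ₁, ζ₂) of the Skorokhod problem for η on [0, β]. -/
/-!
The regulators are taken to be the least solution `(ζ₁, ζ₂)` of the inequalities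
`ζ₁ t ≥ sup_{s ≤ t} (ζ₂ s - η s)⁺`, `ζ₂ t ≥ sup_{s ≤ t} (ζ₁ s + η s - β)⁺`, i.e. the pointwise
infimum of all solutions. Solutions exist: a smooth `d` with `η - β < d < η` has locally bounded
variation, and its increasing and decreasing parts, shifted to be nonnegative, solve the system.
Minimality is used through a comparison principle: if capping `(ζ₁, ζ₂)` on `[0, w]` at levels
`(a, b)` still solves the system, then `ζ₁ w ≤ a`. This gives monotonicity, `ζ(0) = 0`, flatness
of `ζ₁` while `χ > 0`, and continuity: where `η` moves by less than `δ`, `ζ₂ - ζ₁` lies in one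
half of the band `[η - β, η]`, so only one regulator can grow there, and by at most `δ`.
-/

/-- A solution of the Skorokhod problem for a continuous path `η` on the
interval `[0, β]`, as in Section 3.3 of the paper: `χ = η + ζ₁ − ζ₂` stays in
`[0, β]`, the regulators `ζ₁, ζ₂` are continuous, nondecreasing, start at `0`,
`ζ₁` increases only when `χ = 0` and `ζ₂` increases only when `χ = β`. -/
def IsSkorokhodSolution (β : ℝ) (η χ ζ₁ ζ₂ : ℝ → ℝ) : Prop :=
  ContinuousOn χ (Set.Ici 0) ∧ ContinuousOn ζ₁ (Set.Ici 0) ∧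
  ContinuousOn ζ₂ (Set.Ici 0) ∧
  (∀ t : ℝ, 0 ≤ t → χ t = η t + ζ₁ t - ζ₂ t) ∧
  (∀ t : ℝ, 0 ≤ t → χ t ∈ Set.Icc 0 β) ∧
  MonotoneOn ζ₁ (Set.Ici 0) ∧ MonotoneOn ζ₂ (Set.Ici 0) ∧
  ζ₁ 0 = 0 ∧ ζ₂ 0 = 0 ∧
  (∀ s t : ℝ, 0 ≤ s → s ≤ t → (∀ u ∈ Set.Icc s t, 0 < χ u) → ζ₁ t = ζ₁ s) ∧
  (∀ s t : ℝ, 0 ≤ s → s ≤ t → (∀ u ∈ Set.Icc s t, χ u < β) → ζ₂ t = ζ₂ s)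

open Set Filter Topology
open scoped Manifold

theorem ContDiff.locallyBoundedVariationOn {d : ℝ → ℝ} (hd : ContDiff ℝ 1 d) (s : Set ℝ) :
    LocallyBoundedVariationOn d s := by
  intro a b _ _
  obtain ⟨K, hK⟩ := hd.contDiffOn.exists_lipschitzOnWith one_ne_zero (convex_Icc a b)
    isCompact_Icc
  exact hK.comp_boundedVariationOn (fun x hx => hx.2)
    ((monotoneOn_id (s := univ)).locallyBoundedVariationOn a b trivial trivial |>.mono
      fun x hx => ⟨trivial, hx.2⟩)

theorem exists_contDiff_forall_mem_Ioo {φ ψ : ℝ → ℝ} (hφ : ContinuousOn φ (Ici 0))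
    (hψ : ContinuousOn ψ (Ici 0)) (hpos : ∀ t, 0 ≤ t → 0 < φ t + ψ t) :
    ∃ d : ℝ → ℝ, ContDiff ℝ 1 d ∧ ∀ t, 0 ≤ t → d t ∈ Ioo (-ψ t) (φ t) := by
  have hloc : ∀ t : ℝ, ∃ c : ℝ, ∀ᶠ u in 𝓝 t, 0 ≤ u → c ∈ Ioo (-ψ u) (φ u) := by
    intro t
    rcases lt_or_ge t 0 with ht | ht
    · exact ⟨0, (eventually_lt_nhds ht).mono fun u hu h => absurd h hu.not_ge⟩
    refine ⟨(φ t - ψ t) / 2, eventually_nhdsWithin_iff.mp ?_⟩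
    have hφt := (hφ t ht).eventually
      (lt_mem_nhds (a := (φ t - ψ t) / 2) (by linarith [hpos t ht]))
    have hψt := (hψ t ht).eventually
      (lt_mem_nhds (a := (ψ t - φ t) / 2) (by linarith [hpos t ht]))
    filter_upwards [hφt, hψt] with u hφu hψu using ⟨by linarith, hφu⟩
  obtain ⟨d, hd⟩ := exists_contMDiffMap_forall_mem_convex_of_local_const 𝓘(ℝ, ℝ) (n := 1)
    (t := fun t => {y | 0 ≤ t → y ∈ Ioo (-ψ t) (φ t)})
    (fun t => (convex_Ioo _ _).setOfPred_const_imp) hloc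
  exact ⟨d, d.contMDiff.contDiff, hd⟩

theorem MonotoneOn.continuousWithinAt_of_forall_le_add {F : ℝ → ℝ} {s : Set ℝ}
    (hF : MonotoneOn F s) {t : ℝ} (ht : t ∈ s)
    (h : ∀ ε > 0, ∃ ρ > 0, ∀ v ∈ s, ∀ w ∈ s, v ≤ w → dist v t < ρ → dist w t < ρ →
      F w ≤ F v + ε) :
    ContinuousWithinAt F s t := by
  refine Metric.continuousWithinAt_iff.2 fun ε hε => ?_
  obtain ⟨ρ, hρ, hF'⟩ := h (ε / 2) (half_pos hε)
  refine ⟨ρ, hρ, fun y hy hyρ => ?_⟩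
  rw [Real.dist_eq, abs_lt]
  have htρ : dist t t < ρ := by rwa [dist_self]
  rcases le_total t y with hty | hyt
  · have := hF' t ht y hy hty htρ hyρ
    constructor <;> linarith [hF ht hy hty]
  · have := hF' y hy t ht hyt hyρ htρ
    constructor <;> linarith [hF hy ht hyt]

theorem ContinuousWithinAt.exists_forall_dist_lt {α β : Type*} [PseudoMetricSpace α]
    [PseudoMetricSpace β] {F : α → β} {s : Set α} {t : α} {ε : ℝ}
    (hF : ContinuousWithinAt F s t) (hε : 0 < ε) :
    ∃ ρ > 0, ∀ x ∈ s, ∀ y ∈ s, dist x t < ρ → dist y t < ρ → dist (F x) (F y) < ε := by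
  obtain ⟨ρ, hρ, h⟩ := Metric.continuousWithinAt_iff.1 hF (ε / 2) (half_pos hε)
  exact ⟨ρ, hρ, fun x hx y hy hxt hyt =>
    (dist_triangle_right _ _ (F t)).trans_lt (by linarith [h hx hxt, h hy hyt])⟩

namespace Skorokhod

def Dominates (h f : ℝ → ℝ) : Prop :=
  ∀ ⦃s t : ℝ⦄, 0 ≤ s → s ≤ t → 0 ≤ f t ∧ h s ≤ f t

def IsSupersolution (φ ψ f g : ℝ → ℝ) : Prop :=
  Dominates (fun u => g u - φ u) f ∧ Dominates (fun u => f u - ψ u) g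

/-- The `ζ₁` of the least solution of `ζ₁ t ≥ sup_{s ≤ t} (ζ₂ s - φ s)⁺`,
`ζ₂ t ≥ sup_{s ≤ t} (ζ₁ s - ψ s)⁺`; its `ζ₂` is `minimalRegulator ψ φ`. The interval `[0, β]`
corresponds to `φ = η`, `ψ = β - η`. -/
noncomputable def minimalRegulator (φ ψ : ℝ → ℝ) (t : ℝ) : ℝ :=
  sInf {x | ∃ f g, IsSupersolution φ ψ f g ∧ f t = x}

noncomputable def capUntil (w a : ℝ) (f : ℝ → ℝ) (u : ℝ) : ℝ :=
  if u ≤ w then min (f u) a else f u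

variable {φ ψ f g h : ℝ → ℝ} {a b s t v w δ : ℝ}

theorem IsSupersolution.symm (hfg : IsSupersolution φ ψ f g) : IsSupersolution ψ φ g f :=
  And.symm hfg

theorem dominates_of_monotoneOn (hf : MonotoneOn f (Ici 0)) (hf0 : 0 ≤ f 0)
    (hh : ∀ u, 0 ≤ u → h u ≤ f u) : Dominates h f := fun s _ hs hst =>
  ⟨hf0.trans (hf (le_refl (0 : ℝ)) (hs.trans hst) (hs.trans hst)),
    (hh s hs).trans (hf hs (hs.trans hst) hst)⟩

theorem exists_isSupersolution (hφ : ContinuousOn φ (Ici 0)) (hψ : ContinuousOn ψ (Ici 0))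
    (hpos : ∀ t, 0 ≤ t → 0 < φ t + ψ t) : ∃ f g, IsSupersolution φ ψ f g := by
  obtain ⟨d, hd, hdmem⟩ := exists_contDiff_forall_mem_Ioo hφ hψ hpos
  obtain ⟨p, q, hp, hq, rfl⟩ :=
    (hd.locallyBoundedVariationOn (Ici 0)).exists_monotoneOn_sub_monotoneOn
  refine ⟨fun u => q u + (|p 0| + |q 0|), fun u => p u + (|p 0| + |q 0|),
    dominates_of_monotoneOn (hq.add_const _) (by linarith [neg_abs_le (q 0), abs_nonneg (p 0)])
      fun u hu => ?_,
    dominates_of_monotoneOn (hp.add_const _) (by linarith [neg_abs_le (p 0), abs_nonneg (q 0)])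
      fun u hu => ?_⟩
  · linarith [(hdmem u hu).2, show (p - q) u = p u - q u from rfl]
  · linarith [(hdmem u hu).1, show (p - q) u = p u - q u from rfl]

theorem minimalRegulator_le (hfg : IsSupersolution φ ψ f g) (ht : 0 ≤ t) :
    minimalRegulator φ ψ t ≤ f t :=
  csInf_le ⟨0, by rintro _ ⟨f', g', hfg', rfl⟩; exact (hfg'.1 ht le_rfl).1⟩ ⟨f, g, hfg, rfl⟩

theorem dominates_minimalRegulator (hfg : IsSupersolution φ ψ f g) :
    Dominates (fun u => minimalRegulator ψ φ u - φ u) (minimalRegulator φ ψ) := by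
  intro s t hs hst
  constructor <;> refine le_csInf ⟨f t, f, g, hfg, rfl⟩ ?_ <;>
    rintro _ ⟨f', g', hfg', rfl⟩
  · exact (hfg'.1 hs hst).1
  · linarith [minimalRegulator_le hfg'.symm hs, (hfg'.1 hs hst).2]

theorem isSupersolution_minimalRegulator (hfg : IsSupersolution φ ψ f g) :
    IsSupersolution φ ψ (minimalRegulator φ ψ) (minimalRegulator ψ φ) :=
  ⟨dominates_minimalRegulator hfg, dominates_minimalRegulator hfg.symm⟩

theorem minimalRegulator_nonneg (hfg : IsSupersolution φ ψ f g) (ht : 0 ≤ t) :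
    0 ≤ minimalRegulator φ ψ t :=
  ((isSupersolution_minimalRegulator hfg).1 ht le_rfl).1

theorem capUntil_le (u : ℝ) : capUntil w a f u ≤ f u := by
  unfold capUntil
  split_ifs
  exacts [min_le_left _ _, le_rfl]

theorem Dominates.cap (hfg : Dominates (fun u => g u - φ u) f) (ha : 0 ≤ a)
    (h : ∀ u ∈ Icc 0 w, min (g u) b - φ u ≤ a) :
    Dominates (fun u => capUntil w b g u - φ u) (capUntil w a f) := by
  intro s t hs hst
  obtain ⟨hf0, hfs⟩ := hfg hs hst
  by_cases htw : t ≤ w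
  · simp only [capUntil, htw, hst.trans htw, if_true] at hfs ⊢
    exact ⟨le_min hf0 ha, le_min (by linarith [min_le_left (g s) b]) (h s ⟨hs, hst.trans htw⟩)⟩
  · have hft : capUntil w a f t = f t := if_neg htw
    dsimp only at hfs ⊢
    rw [hft]
    exact ⟨hf0, by linarith [capUntil_le (w := w) (a := b) (f := g) s]⟩

/-- The capped pair is again a supersolution, hence lies above the minimal one. -/
theorem minimalRegulator_le_of_capped (hfg : IsSupersolution φ ψ f g) (hw : 0 ≤ w)
    (ha : 0 ≤ a) (hb : 0 ≤ b)
    (h₁ : ∀ u ∈ Icc 0 w, min (minimalRegulator ψ φ u) b - φ u ≤ a)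
    (h₂ : ∀ u ∈ Icc 0 w, min (minimalRegulator φ ψ u) a - ψ u ≤ b) :
    minimalRegulator φ ψ w ≤ a := by
  have hR := isSupersolution_minimalRegulator hfg
  have hcap : IsSupersolution φ ψ (capUntil w a (minimalRegulator φ ψ))
      (capUntil w b (minimalRegulator ψ φ)) :=
    ⟨hR.1.cap ha h₁, hR.2.cap hb h₂⟩
  calc minimalRegulator φ ψ w ≤ capUntil w a (minimalRegulator φ ψ) w :=
        minimalRegulator_le hcap hw
    _ ≤ a := by simp [capUntil]

theorem monotoneOn_minimalRegulator (hfg : IsSupersolution φ ψ f g) :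
    MonotoneOn (minimalRegulator φ ψ) (Ici 0) := by
  intro s hs t ht hst
  have hR := isSupersolution_minimalRegulator hfg
  refine minimalRegulator_le_of_capped hfg hs (minimalRegulator_nonneg hfg ht)
    (minimalRegulator_nonneg hfg.symm ht) (fun u hu => ?_) (fun u hu => ?_)
  · linarith [min_le_left (minimalRegulator ψ φ u) (minimalRegulator ψ φ t),
      (hR.1 hu.1 (hu.2.trans hst)).2]
  · linarith [min_le_left (minimalRegulator φ ψ u) (minimalRegulator φ ψ t),
      (hR.2 hu.1 (hu.2.trans hst)).2]

theorem minimalRegulator_zero (hfg : IsSupersolution φ ψ f g) (hφ0 : 0 ≤ φ 0) (hψ0 : 0 ≤ ψ 0) :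
    minimalRegulator φ ψ 0 = 0 := by
  refine le_antisymm (minimalRegulator_le_of_capped hfg le_rfl le_rfl le_rfl (b := 0)
    (fun u hu => ?_) (fun u hu => ?_)) (minimalRegulator_nonneg hfg le_rfl)
  all_goals
    obtain rfl : u = 0 := le_antisymm hu.2 hu.1
    linarith [min_le_right (minimalRegulator ψ φ 0) 0, min_le_right (minimalRegulator φ ψ 0) 0]

theorem minimalRegulator_le_of_band (hfg : IsSupersolution φ ψ f g) (hv : 0 ≤ v) (hvw : v ≤ w)
    (ha : minimalRegulator φ ψ v ≤ a) (hb : minimalRegulator ψ φ v ≤ b)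
    (hband : ∀ u ∈ Icc v w, b - φ u ≤ a ∧ a - ψ u ≤ b) :
    minimalRegulator φ ψ w ≤ a := by
  have hR := isSupersolution_minimalRegulator hfg
  refine minimalRegulator_le_of_capped hfg (hv.trans hvw)
    ((minimalRegulator_nonneg hfg hv).trans ha) ((minimalRegulator_nonneg hfg.symm hv).trans hb)
    (fun u hu => ?_) (fun u hu => ?_)
  all_goals rcases le_total u v with huv | hvu
  · linarith [min_le_left (minimalRegulator ψ φ u) b, (hR.1 hu.1 huv).2]
  · linarith [min_le_right (minimalRegulator ψ φ u) b, (hband u ⟨hvu, hu.2⟩).1]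
  · linarith [min_le_left (minimalRegulator φ ψ u) a, (hR.2 hu.1 huv).2]
  · linarith [min_le_right (minimalRegulator φ ψ u) a, (hband u ⟨hvu, hu.2⟩).2]

theorem minimalRegulator_le_add_of_upper_half (hfg : IsSupersolution φ ψ f g) (hv : 0 ≤ v)
    (hvw : v ≤ w) (hδ0 : 0 ≤ δ) (hδ : 4 * δ ≤ φ v + ψ v)
    (hφ : ∀ u ∈ Icc v w, φ v - δ ≤ φ u) (hψ : ∀ u ∈ Icc v w, ψ v - δ ≤ ψ u)
    (hupper : φ v - ψ v ≤ 2 * (minimalRegulator ψ φ v - minimalRegulator φ ψ v)) :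
    minimalRegulator φ ψ w ≤ minimalRegulator φ ψ v + δ ∧
      minimalRegulator ψ φ w ≤ minimalRegulator ψ φ v + δ := by
  have hR := isSupersolution_minimalRegulator hfg
  have hband : ∀ u ∈ Icc v w, minimalRegulator ψ φ v - φ u ≤ minimalRegulator φ ψ v + δ ∧
      minimalRegulator φ ψ v + δ - ψ u ≤ minimalRegulator ψ φ v := fun u hu =>
    ⟨by linarith [(hR.1 hv le_rfl).2, hφ u hu], by linarith [hψ u hu]⟩
  exact ⟨minimalRegulator_le_of_band hfg hv hvw (le_add_of_nonneg_right hδ0) le_rfl hband,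
    (minimalRegulator_le_of_band hfg.symm hv hvw le_rfl (le_add_of_nonneg_right hδ0)
      fun u hu => (hband u hu).symm).trans (le_add_of_nonneg_right hδ0)⟩

theorem minimalRegulator_le_add (hfg : IsSupersolution φ ψ f g) (hv : 0 ≤ v) (hvw : v ≤ w)
    (hδ0 : 0 ≤ δ) (hδ : 4 * δ ≤ φ v + ψ v)
    (hφ : ∀ u ∈ Icc v w, φ v - δ ≤ φ u) (hψ : ∀ u ∈ Icc v w, ψ v - δ ≤ ψ u) :
    minimalRegulator φ ψ w ≤ minimalRegulator φ ψ v + δ := by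
  rcases le_total (φ v - ψ v) (2 * (minimalRegulator ψ φ v - minimalRegulator φ ψ v)) with h | h
  · exact (minimalRegulator_le_add_of_upper_half hfg hv hvw hδ0 hδ hφ hψ h).1
  · exact (minimalRegulator_le_add_of_upper_half hfg.symm hv hvw hδ0 (by linarith) hψ hφ
      (by linarith)).2

theorem continuousOn_minimalRegulator (hφ : ContinuousOn φ (Ici 0))
    (hψ : ContinuousOn ψ (Ici 0)) (hpos : ∀ t, 0 ≤ t → 0 < φ t + ψ t)
    (hfg : IsSupersolution φ ψ f g) : ContinuousOn (minimalRegulator φ ψ) (Ici 0) := by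
  intro t ht
  refine (monotoneOn_minimalRegulator hfg).continuousWithinAt_of_forall_le_add ht fun ε hε => ?_
  set δ := min ε ((φ t + ψ t) / 6)
  have hδ : 0 < δ := lt_min hε (by linarith [hpos t ht])
  obtain ⟨ρ₁, hρ₁, hφρ⟩ := (hφ t ht).exists_forall_dist_lt hδ
  obtain ⟨ρ₂, hρ₂, hψρ⟩ := (hψ t ht).exists_forall_dist_lt hδ
  refine ⟨min ρ₁ ρ₂, lt_min hρ₁ hρ₂, fun v hv w hw hvw hvt hwt => ?_⟩
  have hnear : ∀ u ∈ Icc v w, dist u t < min ρ₁ ρ₂ := fun u hu => by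
    rw [Real.dist_eq, abs_sub_lt_iff] at *
    constructor <;> linarith [hu.1, hu.2]
  have hosc : ∀ {F : ℝ → ℝ} {ρ : ℝ}, min ρ₁ ρ₂ ≤ ρ → (∀ x ∈ Ici 0, ∀ y ∈ Ici 0,
      dist x t < ρ → dist y t < ρ → dist (F x) (F y) < δ) → ∀ u ∈ Icc v w, F v - δ ≤ F u :=
    fun hρ hF u hu => by
      have := hF v hv u (hv.trans hu.1) (hvt.trans_le hρ) ((hnear u hu).trans_le hρ)
      rw [Real.dist_eq, abs_sub_lt_iff] at this
      linarith
  have hband : 4 * δ ≤ φ v + ψ v := by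
    have hφv := hφρ v hv t ht (hvt.trans_le (min_le_left _ _)) (by simpa using hρ₁)
    have hψv := hψρ v hv t ht (hvt.trans_le (min_le_right _ _)) (by simpa using hρ₂)
    rw [Real.dist_eq, abs_sub_lt_iff] at hφv hψv
    linarith [min_le_right ε ((φ t + ψ t) / 6)]
  linarith [minimalRegulator_le_add hfg hv hvw hδ.le hband (hosc (min_le_left _ _) hφρ)
    (hosc (min_le_right _ _) hψρ), min_le_left ε ((φ t + ψ t) / 6)]

theorem minimalRegulator_eq_of_forall_lt (hφ : ContinuousOn φ (Ici 0))
    (hL : ContinuousOn (minimalRegulator φ ψ) (Ici 0))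
    (hU : ContinuousOn (minimalRegulator ψ φ) (Ici 0)) (hfg : IsSupersolution φ ψ f g)
    (hs : 0 ≤ s) (hst : s ≤ t)
    (hlt : ∀ u ∈ Icc s t, minimalRegulator ψ φ u - φ u < minimalRegulator φ ψ u) :
    minimalRegulator φ ψ t = minimalRegulator φ ψ s := by
  set L := minimalRegulator φ ψ
  set U := minimalRegulator ψ φ
  have hR := isSupersolution_minimalRegulator hfg
  have hmono := monotoneOn_minimalRegulator hfg
  obtain ⟨u₀, hu₀, hmin⟩ := isCompact_Icc.exists_isMinOn (nonempty_Icc.2 hst)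
    ((hL.sub (hU.sub hφ)).mono fun u hu => hs.trans hu.1)
  set κ := L u₀ - (U u₀ - φ u₀)
  have hκ : 0 < κ := sub_pos.2 (hlt u₀ hu₀)
  refine le_antisymm ?_ (hmono hs (hs.trans hst) hst)
  by_contra! hjump
  -- `ζ₁` has slack `κ` on `[s, t]`, so it can be capped at `max (ζ₁ s) (ζ₁ t - κ)`
  have hcap : L t ≤ max (L s) (L t - κ) :=
    minimalRegulator_le_of_capped hfg (hs.trans hst)
      ((minimalRegulator_nonneg hfg hs).trans (le_max_left _ _))
      (minimalRegulator_nonneg hfg.symm (hs.trans hst)) (b := U t) (fun u hu => ?_)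
      fun u hu => by linarith [min_le_left (L u) (max (L s) (L t - κ)), (hR.2 hu.1 hu.2).2]
  · exact (max_lt hjump (by linarith)).not_ge hcap
  rcases le_total u s with hus | hsu
  · linarith [min_le_left (U u) (U t), (hR.1 hu.1 hus).2, le_max_left (L s) (L t - κ)]
  · have hκu : κ ≤ L u - (U u - φ u) := hmin ⟨hsu, hu.2⟩
    linarith [min_le_left (U u) (U t), hmono hu.1 (hs.trans hst) hu.2,
      le_max_right (L s) (L t - κ)]

end Skorokhod

open Skorokhod

/-- Existence of a solution of the Skorokhod problem on `[0, β]` for every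
continuous input path starting in `[0, β]` (Section 3.3 of the paper). -/
theorem skorokhod_problem_exists
    (β : ℝ) (hβ : 0 < β) (η : ℝ → ℝ)
    (hη : ContinuousOn η (Set.Ici 0)) (hη0 : η 0 ∈ Set.Icc 0 β) :
    ∃ χ ζ₁ ζ₂ : ℝ → ℝ, IsSkorokhodSolution β η χ ζ₁ ζ₂ := by
  set ψ : ℝ → ℝ := fun t => β - η t
  have hψ : ContinuousOn ψ (Ici 0) := continuousOn_const.sub hη
  have hpos : ∀ t, 0 ≤ t → 0 < η t + ψ t := fun t _ => by simpa [ψ] using hβ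
  have hpos' : ∀ t, 0 ≤ t → 0 < ψ t + η t := fun t ht => by linarith [hpos t ht]
  obtain ⟨f, g, hfg⟩ := exists_isSupersolution hη hψ hpos
  have hR := isSupersolution_minimalRegulator hfg
  have hL := continuousOn_minimalRegulator hη hψ hpos hfg
  have hU := continuousOn_minimalRegulator hψ hη hpos' hfg.symm
  refine ⟨fun t => η t + minimalRegulator η ψ t - minimalRegulator ψ η t,
    minimalRegulator η ψ, minimalRegulator ψ η, (hη.add hL).sub hU, hL, hU, fun _ _ => rfl,
    fun t ht => ⟨by linarith [(hR.1 ht le_rfl).2], by linarith [(hR.2 ht le_rfl).2]⟩,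
    monotoneOn_minimalRegulator hfg, monotoneOn_minimalRegulator hfg.symm,
    minimalRegulator_zero hfg hη0.1 (by simpa [ψ] using hη0.2),
    minimalRegulator_zero hfg.symm (by simpa [ψ] using hη0.2) hη0.1,
    fun s t hs hst hχ => minimalRegulator_eq_of_forall_lt hη hL hU hfg hs hst
      fun u hu => by linarith [hχ u hu],
    fun s t hs hst hχ => minimalRegulator_eq_of_forall_lt hψ hU hL hfg.symm hs hst
      fun u hu => by linarith [hχ u hu]⟩
end

section
/- For every β > 0 and every continuous function η : ℝ≥0 → ℝ with η(0) ∈ [0, β], the Skorokhod problem for η on [0, β] has at most one solution: if (χ, ζ₁, ζ₂) and (χ', ζ₁', ζ₂') are both solutions, then χ = χ', ζ₁ = ζ₁' and ζ₂ = ζ₂'. -/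
/-- If a continuous (on `Ici 0`) function is constant equal to `c` on `Ioc a b`
with `0 ≤ a < b`, then `f a = c`. -/
private lemma eq_of_forall_Ioc {f : ℝ → ℝ} {a b c : ℝ} (h0 : 0 ≤ a) (hab : a < b)
    (hf : ContinuousOn f (Set.Ici 0)) (hconst : ∀ s ∈ Set.Ioc a b, f s = c) : f a = c := by
  have hsub : Set.Ioc a b ⊆ Set.Ici 0 := fun x hx => le_trans h0 hx.1.le
  have hcw : Filter.Tendsto f (nhdsWithin a (Set.Ioc a b)) (nhds (f a)) :=
    ((hf a h0).mono hsub).tendsto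
  have hcc : Filter.Tendsto f (nhdsWithin a (Set.Ioc a b)) (nhds c) := by
    apply Filter.Tendsto.congr' _ tendsto_const_nhds
    filter_upwards [self_mem_nhdsWithin] with x hx
    exact (hconst x hx).symm
  have : (nhdsWithin a (Set.Ioc a b)).NeBot := left_nhdsWithin_Ioc_neBot hab
  exact tendsto_nhds_unique hcw hcc

private lemma sk_chi_le (β : ℝ) (η χ ζ₁ ζ₂ χ' ζ₁' ζ₂' : ℝ → ℝ)
    (hsol : IsSkorokhodSolution β η χ ζ₁ ζ₂)
    (hsol' : IsSkorokhodSolution β η χ' ζ₁' ζ₂') :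
    ∀ t, 0 ≤ t → χ t ≤ χ' t := by
  obtain ⟨hχc, hζ₁c, hζ₂c, heq, hmem, hζ₁m, hζ₂m, hζ₁0, hζ₂0, hflat₁, hflat₂⟩ := hsol
  obtain ⟨hχc', hζ₁c', hζ₂c', heq', hmem', hζ₁m', hζ₂m', hζ₁0', hζ₂0', hflat₁', hflat₂'⟩ := hsol'
  intro t ht
  by_contra hcon
  push_neg at hcon
  -- the set where χ ≤ χ'
  set A : Set ℝ := Set.Icc 0 t ∩ {u | χ u - χ' u ≤ 0} with hA
  have hIccsub : Set.Icc (0:ℝ) t ⊆ Set.Ici 0 := fun x hx => hx.1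
  have hAclosed : IsClosed A := by
    have hc : ContinuousOn (fun u => χ u - χ' u) (Set.Icc 0 t) :=
      ((hχc.mono hIccsub).sub (hχc'.mono hIccsub))
    have : A = Set.Icc 0 t ∩ (fun u => χ u - χ' u) ⁻¹' Set.Iic 0 := by
      ext x; simp [hA, Set.mem_Iic]
    rw [this]
    exact hc.preimage_isClosed_of_isClosed isClosed_Icc isClosed_Iic
  have h00 : χ 0 = χ' 0 := by
    rw [heq 0 le_rfl, heq' 0 le_rfl, hζ₁0, hζ₂0, hζ₁0', hζ₂0']
  have hA0 : (0:ℝ) ∈ A := ⟨⟨le_rfl, ht⟩, by simp [h00]⟩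
  have hAne : A.Nonempty := ⟨0, hA0⟩
  have hAbdd : BddAbove A := ⟨t, fun x hx => hx.1.2⟩
  set T := sSup A with hT
  have hTA : T ∈ A := hAclosed.csSup_mem hAne hAbdd
  have hT0 : 0 ≤ T := hTA.1.1
  have hTt : T ≤ t := hTA.1.2
  have hTlt : T < t := by
    rcases lt_or_eq_of_le hTt with h | h
    · exact h
    · exfalso; have := hTA.2; rw [h] at this; simp at this; linarith
  -- on (T, t], χ' < χ
  have hgt : ∀ s ∈ Set.Ioc T t, χ' s < χ s := by
    intro s hs
    by_contra h
    push_neg at h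
    have : s ∈ A := ⟨⟨le_trans hT0 hs.1.le, hs.2⟩, by simp; linarith⟩
    have := le_csSup hAbdd this
    linarith [hs.1]
  -- For each s ∈ (T, t], ζ₁ t = ζ₁ s and ζ₂' t = ζ₂' s
  have hz1 : ∀ s ∈ Set.Ioc T t, ζ₁ s = ζ₁ t := by
    intro s hs
    refine (hflat₁ s t (le_trans hT0 hs.1.le) hs.2 ?_).symm
    intro u hu
    have hu' : u ∈ Set.Ioc T t := ⟨lt_of_lt_of_le hs.1 hu.1, hu.2⟩
    have := hgt u hu'
    have h0 := (hmem' u (le_trans hT0 hu'.1.le)).1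
    linarith
  have hz2 : ∀ s ∈ Set.Ioc T t, ζ₂' s = ζ₂' t := by
    intro s hs
    refine (hflat₂' s t (le_trans hT0 hs.1.le) hs.2 ?_).symm
    intro u hu
    have hu' : u ∈ Set.Ioc T t := ⟨lt_of_lt_of_le hs.1 hu.1, hu.2⟩
    have := hgt u hu'
    have hb := (hmem u (le_trans hT0 hu'.1.le)).2
    linarith
  have hζ₁T : ζ₁ T = ζ₁ t := eq_of_forall_Ioc hT0 hTlt hζ₁c hz1
  have hζ₂T : ζ₂' T = ζ₂' t := eq_of_forall_Ioc hT0 hTlt hζ₂c' hz2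
  -- monotonicity bounds
  have hm1 : ζ₂ T ≤ ζ₂ t := hζ₂m (Set.mem_Ici.mpr hT0) (Set.mem_Ici.mpr (le_trans hT0 hTt)) hTt
  have hm2 : ζ₁' T ≤ ζ₁' t := hζ₁m' (Set.mem_Ici.mpr hT0) (Set.mem_Ici.mpr (le_trans hT0 hTt)) hTt
  have heT := heq T hT0
  have heT' := heq' T hT0
  have het := heq t (le_trans hT0 hTt)
  have het' := heq' t (le_trans hT0 hTt)
  have hdT : χ T - χ' T ≤ 0 := hTA.2
  -- χ t - χ' t = (χ T - χ' T) - (ζ₂ t - ζ₂ T) - (ζ₁' t - ζ₁' T) ≤ 0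
  have : χ t - χ' t ≤ 0 := by
    have : χ t - χ' t = (χ T - χ' T) + (ζ₁ t - ζ₁ T) - (ζ₂ t - ζ₂ T)
        - (ζ₁' t - ζ₁' T) + (ζ₂' t - ζ₂' T) := by
      rw [heT, heT', het, het']; ring
    rw [this, ← hζ₁T, ← hζ₂T]
    simp
    linarith
  linarith

private lemma sk_zeta1_eq (β : ℝ) (hβ : 0 < β) (η χ ζ₁ ζ₂ χ' ζ₁' ζ₂' : ℝ → ℝ)
    (hsol : IsSkorokhodSolution β η χ ζ₁ ζ₂)
    (hsol' : IsSkorokhodSolution β η χ' ζ₁' ζ₂')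
    (hχ : ∀ t, 0 ≤ t → χ t = χ' t) :
    ∀ t, 0 ≤ t → ζ₁ t = ζ₁' t := by
  obtain ⟨hχc, hζ₁c, hζ₂c, heq, hmem, hζ₁m, hζ₂m, hζ₁0, hζ₂0, hflat₁, hflat₂⟩ := hsol
  obtain ⟨hχc', hζ₁c', hζ₂c', heq', hmem', hζ₁m', hζ₂m', hζ₁0', hζ₂0', hflat₁', hflat₂'⟩ := hsol'
  intro t ht
  by_contra hcon
  set A : Set ℝ := Set.Icc 0 t ∩ {u | ζ₁ u - ζ₁' u = 0} with hA
  have hIccsub : Set.Icc (0:ℝ) t ⊆ Set.Ici 0 := fun x hx => hx.1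
  have hAclosed : IsClosed A := by
    have hc : ContinuousOn (fun u => ζ₁ u - ζ₁' u) (Set.Icc 0 t) :=
      ((hζ₁c.mono hIccsub).sub (hζ₁c'.mono hIccsub))
    have : A = Set.Icc 0 t ∩ (fun u => ζ₁ u - ζ₁' u) ⁻¹' {0} := by
      ext x; simp [hA]
    rw [this]
    exact hc.preimage_isClosed_of_isClosed isClosed_Icc isClosed_singleton
  have hA0 : (0:ℝ) ∈ A := ⟨⟨le_rfl, ht⟩, by simp [hζ₁0, hζ₁0']⟩
  have hAne : A.Nonempty := ⟨0, hA0⟩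
  have hAbdd : BddAbove A := ⟨t, fun x hx => hx.1.2⟩
  set T := sSup A with hT
  have hTA : T ∈ A := hAclosed.csSup_mem hAne hAbdd
  have hT0 : 0 ≤ T := hTA.1.1
  have hTt : T ≤ t := hTA.1.2
  have hTval : ζ₁ T = ζ₁' T := by have := hTA.2; simp at this; linarith
  have hTlt : T < t := by
    rcases lt_or_eq_of_le hTt with h | h
    · exact h
    · exfalso; apply hcon; rw [← h]; exact hTval
  -- From the equations: ζ₁ u - ζ₁' u = ζ₂ u - ζ₂' u for u ≥ 0
  have hkey : ∀ u, 0 ≤ u → ζ₁ u - ζ₁' u = ζ₂ u - ζ₂' u := by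
    intro u hu
    have h1 := heq u hu
    have h2 := heq' u hu
    have h3 := hχ u hu
    linarith
  -- find a point s ∈ (T, t] in A, contradicting supremum
  have hχT := hmem T hT0
  have hstep : ∃ s ∈ Set.Ioc T t, s ∈ A := by
    rcases lt_or_ge 0 (χ T) with hpos | hle
    · -- χ T > 0 : use flatness of ζ₁, ζ₁'
      have hcw : ContinuousWithinAt χ (Set.Ici 0) T := hχc T (Set.mem_Ici.mpr hT0)
      have hev : ∀ᶠ u in nhdsWithin T (Set.Ici 0), 0 < χ u :=
        hcw.eventually (eventually_gt_nhds hpos)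
      rw [eventually_nhdsWithin_iff, Metric.eventually_nhds_iff] at hev
      obtain ⟨ε, hε, hball⟩ := hev
      set s := min t (T + ε / 2) with hsdef
      have hTs : T < s := by simp only [hsdef, lt_min_iff]; exact ⟨hTlt, by linarith⟩
      have hst : s ≤ t := min_le_left _ _
      have hs0 : 0 ≤ s := le_trans hT0 hTs.le
      have hpos' : ∀ u ∈ Set.Icc T s, 0 < χ u := by
        intro u hu
        apply hball _ (Set.mem_Ici.mpr (le_trans hT0 hu.1))
        have : u - T < ε := by
          have := hu.2
          have : u ≤ T + ε / 2 := le_trans this (min_le_right _ _)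
          linarith
        rw [Real.dist_eq, abs_of_nonneg (by linarith [hu.1])]
        exact this
      have h1 : ζ₁ s = ζ₁ T := hflat₁ T s hT0 hTs.le hpos'
      have h2 : ζ₁' s = ζ₁' T := by
        apply hflat₁' T s hT0 hTs.le
        intro u hu
        rw [← hχ u (le_trans hT0 hu.1)]
        exact hpos' u hu
      exact ⟨s, ⟨hTs, hst⟩, ⟨⟨hs0, hst⟩, by simp [h1, h2, hTval]⟩⟩
    · -- χ T < β : use flatness of ζ₂, ζ₂'
      have hltβ : χ T < β := lt_of_le_of_lt hle hβ
      have hcw : ContinuousWithinAt χ (Set.Ici 0) T := hχc T (Set.mem_Ici.mpr hT0)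
      have hev : ∀ᶠ u in nhdsWithin T (Set.Ici 0), χ u < β :=
        hcw.eventually (eventually_lt_nhds hltβ)
      rw [eventually_nhdsWithin_iff, Metric.eventually_nhds_iff] at hev
      obtain ⟨ε, hε, hball⟩ := hev
      set s := min t (T + ε / 2) with hsdef
      have hTs : T < s := by simp only [hsdef, lt_min_iff]; exact ⟨hTlt, by linarith⟩
      have hst : s ≤ t := min_le_left _ _
      have hs0 : 0 ≤ s := le_trans hT0 hTs.le
      have hlt' : ∀ u ∈ Set.Icc T s, χ u < β := by
        intro u hu
        apply hball _ (Set.mem_Ici.mpr (le_trans hT0 hu.1))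
        have : u - T < ε := by
          have := hu.2
          have : u ≤ T + ε / 2 := le_trans this (min_le_right _ _)
          linarith
        rw [Real.dist_eq, abs_of_nonneg (by linarith [hu.1])]
        exact this
      have h1 : ζ₂ s = ζ₂ T := hflat₂ T s hT0 hTs.le hlt'
      have h2 : ζ₂' s = ζ₂' T := by
        apply hflat₂' T s hT0 hTs.le
        intro u hu
        rw [← hχ u (le_trans hT0 hu.1)]
        exact hlt' u hu
      have hk1 := hkey s hs0
      have hk2 := hkey T hT0
      refine ⟨s, ⟨hTs, hst⟩, ⟨⟨hs0, hst⟩, ?_⟩⟩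
      simp only [Set.mem_setOf_eq]
      rw [hk1, h1, h2, ← hk2, hTval]
      ring
  obtain ⟨s, hs, hsA⟩ := hstep
  have := le_csSup hAbdd hsA
  linarith [hs.1]

/-- Uniqueness of the solution of the Skorokhod problem on `[0, β]`
(Section 3.3 of the paper). -/
theorem skorokhod_problem_unique
    (β : ℝ) (hβ : 0 < β) (η : ℝ → ℝ)
    (hη : ContinuousOn η (Set.Ici 0)) (hη0 : η 0 ∈ Set.Icc 0 β)
    (χ ζ₁ ζ₂ χ' ζ₁' ζ₂' : ℝ → ℝ)
    (hsol : IsSkorokhodSolution β η χ ζ₁ ζ₂)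
    (hsol' : IsSkorokhodSolution β η χ' ζ₁' ζ₂') :
    Set.EqOn χ χ' (Set.Ici 0) ∧ Set.EqOn ζ₁ ζ₁' (Set.Ici 0) ∧
      Set.EqOn ζ₂ ζ₂' (Set.Ici 0) := by
  have hle := sk_chi_le β η χ ζ₁ ζ₂ χ' ζ₁' ζ₂' hsol hsol'
  have hge := sk_chi_le β η χ' ζ₁' ζ₂' χ ζ₁ ζ₂ hsol' hsol
  have hχ : ∀ t, 0 ≤ t → χ t = χ' t := fun t ht => le_antisymm (hle t ht) (hge t ht)
  have hz1 := sk_zeta1_eq β hβ η χ ζ₁ ζ₂ χ' ζ₁' ζ₂' hsol hsol' hχ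
  obtain ⟨hχc, hζ₁c, hζ₂c, heq, hmem, hζ₁m, hζ₂m, hζ₁0, hζ₂0, hflat₁, hflat₂⟩ := hsol
  obtain ⟨hχc', hζ₁c', hζ₂c', heq', hmem', hζ₁m', hζ₂m', hζ₁0', hζ₂0', hflat₁', hflat₂'⟩ := hsol'
  refine ⟨fun t ht => hχ t ht, fun t ht => hz1 t ht, fun t ht => ?_⟩
  have h1 := heq t ht
  have h2 := heq' t ht
  have h3 := hχ t ht
  have h4 := hz1 t ht
  linarith
end
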